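/- Suppose T_* = [T_inlet(t - ℓ/u_0) - I(t - ℓ/u_0)] e^{-kℓ/u_0} + I(t) holds for all t > ℓ/u_0, where I(t) = e^{-kt} ∫_0^t e^{kt'} k q(t') dt' with q continuous and T_inlet continuously differentiable. Then for t > ℓ/u_0, q satisfies the delay equation q(t) = T_* - T_inlet(t - ℓ/u_0) e^{-kℓ/u_0} - (1/k) T_inlet'(t - ℓ/u_0) e^{-kℓ/u_0} + q(t - ℓ/u_0) e^{-kℓ/u_0}. -/

import Mathlib

/-! Since `I' = -k I + k q`, differentiating the outlet identity on the open set `t > ℓ / u0`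
and eliminating `I t` with the identity itself leaves the delay equation for `q`. -/

open Real Filter Topology

theorem hasDerivAt_exp_mul_integral_exp_mul {f : ℝ → ℝ} (hf : Continuous f) (k x : ℝ) :
    HasDerivAt (fun t => exp (-k * t) * ∫ s in (0 : ℝ)..t, exp (k * s) * f s)
      (-k * (exp (-k * x) * ∫ s in (0 : ℝ)..x, exp (k * s) * f s) + f x) x := by
  have hg : Continuous fun s => exp (k * s) * f s := by fun_prop
  have hexp : HasDerivAt (fun t => exp (-k * t)) (exp (-k * x) * -k) x := by
    simpa using ((hasDerivAt_id x).const_mul (-k)).exp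
  have hint : HasDerivAt (fun t => ∫ s in (0 : ℝ)..t, exp (k * s) * f s) (exp (k * x) * f x) x :=
    intervalIntegral.integral_hasDerivAt_right (hg.intervalIntegrable _ _)
      (hg.stronglyMeasurableAtFilter _ _) hg.continuousAt
  refine (hexp.mul hint).congr_deriv ?_
  have hcancel : exp (-k * x) * exp (k * x) = 1 := by rw [← exp_add]; simp
  linear_combination f x * hcancel

theorem stmt4_general (u0 k ℓ Tstar : ℝ) (hk : 0 < k)
    (Tinlet : ℝ → ℝ) (hTinlet : ContDiff ℝ 1 Tinlet)
    (q : ℝ → ℝ) (hq : Continuous q)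
    (I : ℝ → ℝ)
    (hI : ∀ t, I t = Real.exp (-k * t) * ∫ s in (0:ℝ)..t, Real.exp (k * s) * (k * q s))
    (houtlet : ∀ t, ℓ / u0 < t →
      Tstar = (Tinlet (t - ℓ / u0) - I (t - ℓ / u0)) * Real.exp (-k * ℓ / u0) + I t) :
    ∀ t, ℓ / u0 < t →
      q t = Tstar - Tinlet (t - ℓ / u0) * Real.exp (-k * ℓ / u0)
        - (1 / k) * deriv Tinlet (t - ℓ / u0) * Real.exp (-k * ℓ / u0)
        + q (t - ℓ / u0) * Real.exp (-k * ℓ / u0) := by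
  intro t ht
  set τ := ℓ / u0
  set c := exp (-k * ℓ / u0)
  have hI' : ∀ x, HasDerivAt I (-k * I x + k * q x) x := by
    obtain rfl : I = _ := funext hI
    exact hasDerivAt_exp_mul_integral_exp_mul (f := fun s => k * q s) (by fun_prop) k
  have hshift : HasDerivAt (fun x => x - τ) 1 t := (hasDerivAt_id t).sub_const τ
  have hT' := ((hTinlet.differentiable one_ne_zero).differentiableAt
    (x := t - τ)).hasDerivAt.comp t hshift
  have hIτ' := (hI' (t - τ)).comp t hshift
  have hconst : (fun x => (Tinlet (x - τ) - I (x - τ)) * c + I x) =ᶠ[𝓝 t] fun _ => Tstar := by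
    filter_upwards [Ioi_mem_nhds ht] with x hx using (houtlet x hx).symm
  have hderiv := (((hT'.sub hIτ').mul_const c).add (hI' t)).unique
    ((hasDerivAt_const t Tstar).congr_of_eventuallyEq hconst)
  field_simp
  linear_combination (houtlet t ht) * (-k) + hderiv

theorem stmt4 (u0 k ℓ Tstar : ℝ) (hu : 0 < u0) (hk : 0 < k) (hℓ : 0 < ℓ)
    (Tinlet : ℝ → ℝ) (hTinlet : ContDiff ℝ 1 Tinlet)
    (q : ℝ → ℝ) (hq : Continuous q)
    (I : ℝ → ℝ)
    (hI : ∀ t, I t = Real.exp (-k * t) * ∫ s in (0:ℝ)..t, Real.exp (k * s) * (k * q s))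
    (houtlet : ∀ t, ℓ / u0 < t →
      Tstar = (Tinlet (t - ℓ / u0) - I (t - ℓ / u0)) * Real.exp (-k * ℓ / u0) + I t) :
    ∀ t, ℓ / u0 < t →
      q t = Tstar - Tinlet (t - ℓ / u0) * Real.exp (-k * ℓ / u0)
        - (1 / k) * deriv Tinlet (t - ℓ / u0) * Real.exp (-k * ℓ / u0)
        + q (t - ℓ / u0) * Real.exp (-k * ℓ / u0) :=
  stmt4_general u0 k ℓ Tstar hk Tinlet hTinlet q hq I hI houtlet
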